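/- Let (Z_j, Z_k) be a centered bivariate Gaussian vector with unit variances and correlation ρ ∈ (−1, 1). Define the ordinal variable X_j = Σ_{m=0}^{l_j−1} m·1{Δ_{jm} ≤ Z_j < Δ_{j(m+1)}} with cutoffs −∞ = Δ_{j0} < Δ_{j1} < ⋯ < Δ_{j(l_j−1)} < Δ_{jl_j} = +∞ (l_j ≥ 2), and the binary variable X_k = 1{Z_k > Δ_k} for a cutoff Δ_k ∈ ℝ. Then the population Kendall's tau of (X_j, X_k) equals 2·Σ_{r=1}^{l_j−1} [Φ_2(Δ_{jr}, Δ_k; ρ)·Φ(Δ_{j(r+1)}) − Φ(Δ_{jr})·Φ_2(Δ_{j(r+1)}, Δ_k; ρ)], where for r = l_j − 1 one interprets Φ(Δ_{jl_j}) = Φ(+∞) = 1 and Φ_2(+∞, Δ_k; ρ) = Φ(Δ_k). (Novel bridging function for an ordinal–binary pair with an arbitrary number of levels, F_ob, from Theorem 1.) -/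

import Mathlib

open MeasureTheory ProbabilityTheory Real Matrix

noncomputable section

/-- Density of a centered multivariate Gaussian distribution on `ℝ^d`
with covariance matrix `S`. -/
def mvGaussPDF {d : ℕ} (S : Matrix (Fin d) (Fin d) ℝ) (x : Fin d → ℝ) : ℝ :=
  (Real.sqrt ((2 * Real.pi) ^ d * S.det))⁻¹ * Real.exp (-(x ⬝ᵥ S⁻¹ *ᵥ x) / 2)

/-- Centered multivariate Gaussian measure on `ℝ^d` with covariance matrix `S`. -/
def mvGauss {d : ℕ} (S : Matrix (Fin d) (Fin d) ℝ) : Measure (Fin d → ℝ) :=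
  MeasureTheory.volume.withDensity fun x => ENNReal.ofReal (mvGaussPDF S x)

/-- `Φ_d(a; S) = P(U₁ ≤ a₁, …, U_d ≤ a_d)` for a centered Gaussian vector `U` with
covariance matrix `S`.  Extended-real bounds implement the conventions that a `+∞`
bound drops the corresponding constraint, while a `-∞` bound gives probability `0`. -/
def PhiVec {d : ℕ} (a : Fin d → EReal) (S : Matrix (Fin d) (Fin d) ℝ) : ℝ :=
  (mvGauss S {x | ∀ i, (x i : EReal) ≤ a i}).toReal

/-- Standard normal CDF `Φ`, with extended-real argument (`Φ(+∞) = 1`, `Φ(-∞) = 0`). -/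
def stdPhi (a : EReal) : ℝ :=
  (gaussianReal 0 1 {x : ℝ | (x : EReal) ≤ a}).toReal

/-- The `2 × 2` correlation matrix with correlation `ρ`. -/
def corrMat (ρ : ℝ) : Matrix (Fin 2) (Fin 2) ℝ := !![1, ρ; ρ, 1]

/-- Bivariate standard normal CDF `Φ₂(a, b; ρ)` with extended-real bounds. -/
def Phi2 (a b : EReal) (ρ : ℝ) : ℝ := PhiVec ![a, b] (corrMat ρ)

/-- The binary variable `1{z > Δ}` obtained by dichotomizing a latent variable `z`. -/
def binVar (Δ : ℝ) (z : ℝ) : ℝ := if Δ < z then 1 else 0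

/-- The truncated variable `z · 1{z > Δ}` obtained by truncating a latent variable `z`. -/
def truncVar (Δ : ℝ) (z : ℝ) : ℝ := if Δ < z then z else 0

/-- The ordinal variable `∑_{m=0}^{l-1} m · 1{Δ_m ≤ z < Δ_{m+1}}` obtained from a latent
variable `z` via extended-real cutoffs `Δ`. -/
def ordVar (l : ℕ) (Δ : ℕ → EReal) (z : ℝ) : ℝ :=
  ∑ m ∈ Finset.range l,
    (m : ℝ) * (if Δ m ≤ (z : EReal) ∧ (z : EReal) < Δ (m + 1) then 1 else 0)

open scoped ENNReal NNReal

/-!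
Write `X = ordVar (Z 0)` and `Y = binVar (Z 1) = 1_K(Z)`. Since `Y - Y' ∈ {-1, 0, 1}`,
`sign ((X - X') (Y - Y')) = sign (X - X') (Y - Y')`, and `X = r` on the slab
`A_r = {Δ_r ≤ Z 0 < Δ_{r+1}}`; so for independent copies the expectation is
`∑_{r,s} sign (r - s) (P(A_r ∩ K) P(A_s) - P(A_r) P(A_s ∩ K))`. The Gaussian law enters only
through `P(A_r) = Φ(Δ_{r+1}) - Φ(Δ_r)` and `P(A_r \ K) = Φ₂(Δ_{r+1}, Δₖ) - Φ₂(Δ_r, Δₖ)`: the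
first marginal is standard normal, hence atomless, so closed and open cutoffs give the same
probabilities. The summand is symmetric in `(r, s)`, and its sum over `s < r` telescopes to
`Φ₂(Δ_r, Δₖ) Φ(Δ_{r+1}) - Φ(Δ_r) Φ₂(Δ_{r+1}, Δₖ)`.
-/

section NoAtoms

variable {α : Type*} [MeasurableSpace α] {ν : Measure α} {f : α → ℝ}

lemma measure_inter_coe_lt_eq_coe_le (hatom : ∀ c, ν {x | f x = c} = 0) (a : EReal) (W : Set α) :
    ν ({x | (f x : EReal) < a} ∩ W) = ν ({x | (f x : EReal) ≤ a} ∩ W) := by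
  have hnull : ν {x | (f x : EReal) = a} = 0 := by
    induction a using EReal.rec with
    | bot => simp
    | coe c => simpa using hatom c
    | top => simp
  refine measure_congr (Filter.eventuallyEq_set.mpr ?_)
  filter_upwards [measure_eq_zero_iff_ae_notMem.mp hnull] with x hx
  simp_all [le_iff_lt_or_eq]

lemma measureReal_slab_inter [IsFiniteMeasure ν] (hf : Measurable f)
    (hatom : ∀ c, ν {x | f x = c} = 0) {a b : EReal} (hab : a ≤ b) {W : Set α}
    (hW : MeasurableSet W) :
    ν.real ({x | a ≤ (f x : EReal) ∧ (f x : EReal) < b} ∩ W)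
      = ν.real ({x | (f x : EReal) ≤ b} ∩ W) - ν.real ({x | (f x : EReal) ≤ a} ∩ W) := by
  have hslab : {x | a ≤ (f x : EReal) ∧ (f x : EReal) < b} ∩ W
      = ({x | (f x : EReal) < b} ∩ W) \ ({x | (f x : EReal) < a} ∩ W) := by
    ext x
    simp only [Set.mem_inter_iff, Set.mem_sdiff, Set.mem_ofPred_eq, ← not_lt]
    tauto
  have hsub : {x | (f x : EReal) < a} ∩ W ⊆ {x | (f x : EReal) < b} ∩ W :=
    Set.inter_subset_inter_left W fun x hx => lt_of_lt_of_le hx hab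
  rw [hslab,
    measureReal_sdiff hsub ((measurable_coe_real_ereal.comp hf measurableSet_Iio).inter hW),
    measureReal_def, measureReal_def, measure_inter_coe_lt_eq_coe_le hatom,
    measure_inter_coe_lt_eq_coe_le hatom]
  rfl

end NoAtoms

lemma existsUnique_mem_Ico_of_le_succ {β : Type*} [LinearOrder β] {l : ℕ} {Δ : ℕ → β}
    (hmono : ∀ m < l, Δ m ≤ Δ (m + 1)) {z : β} (h0 : Δ 0 ≤ z) (hl : z < Δ l) :
    ∃! r, r < l ∧ Δ r ≤ z ∧ z < Δ (r + 1) := by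
  have hle : ∀ {i j}, i ≤ j → j ≤ l → Δ i ≤ Δ j := by
    intro i j hij
    induction j, hij using Nat.le_induction with
    | base => exact fun _ => le_rfl
    | succ j _ ih => exact fun hj => (ih (by omega)).trans (hmono j (by omega))
  have hl0 : 0 < l := Nat.pos_of_ne_zero fun h => (h0.trans_lt (h ▸ hl)).false
  have hlast : z < Δ (l - 1 + 1) := by rwa [Nat.sub_add_cancel hl0]
  have hex : ∃ r, z < Δ (r + 1) := ⟨l - 1, hlast⟩
  refine ⟨Nat.find hex, ⟨?_, ?_, Nat.find_spec hex⟩, ?_⟩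
  · have := Nat.find_min' hex hlast
    omega
  · rcases Nat.eq_zero_or_eq_succ_pred (Nat.find hex) with h | h
    · rwa [h]
    · rw [h]
      exact not_lt.mp (Nat.find_min hex (by omega))
  · rintro s ⟨hs, hΔs, hzs⟩
    refine le_antisymm ?_ (Nat.find_min' hex hzs)
    by_contra! h
    exact ((Nat.find_spec hex).trans_le (hle h hs.le)).not_ge hΔs

section Product

variable {α β : Type*} [MeasurableSpace α] [MeasurableSpace β] (μ : Measure α) (ν : Measure β)
  [IsFiniteMeasure μ] [IsFiniteMeasure ν] {S : Set α} {T : Set β}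

lemma integrable_indicator_one_mul_indicator_one (hS : MeasurableSet S) (hT : MeasurableSet T) :
    Integrable (fun p : α × β => S.indicator 1 p.1 * T.indicator (1 : β → ℝ) p.2) (μ.prod ν) :=
  ((integrable_const 1).indicator hS).mul_prod ((integrable_const 1).indicator hT)

lemma integral_indicator_one_mul_indicator_one (hS : MeasurableSet S) (hT : MeasurableSet T) :
    ∫ p, S.indicator 1 p.1 * T.indicator (1 : β → ℝ) p.2 ∂(μ.prod ν) = μ.real S * ν.real T := by
  rw [integral_prod_mul, integral_indicator_one hS, integral_indicator_one hT]

end Product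

section Partition

variable {α : Type*} {n : ℕ} {A : ℕ → Set α}

lemma sum_mul_indicator_eq_of_mem (hA : ∀ x, ∃! r, r < n ∧ x ∈ A r) {x : α} {r : ℕ}
    (hr : r < n) (hx : x ∈ A r) (f : ℕ → ℝ) :
    ∑ m ∈ Finset.range n, f m * (A m).indicator 1 x = f r := by
  rw [Finset.sum_eq_single_of_mem r (Finset.mem_range.2 hr), Set.indicator_of_mem hx,
    Pi.one_apply, mul_one]
  intro m hm hmr
  rw [Set.indicator_of_notMem, mul_zero]
  exact fun hxm => hmr ((hA x).unique ⟨Finset.mem_range.1 hm, hxm⟩ ⟨hr, hx⟩)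

lemma sign_sub_eq_sum_indicator (hA : ∀ x, ∃! r, r < n ∧ x ∈ A r) {X : α → ℝ} {c : ℕ → ℝ}
    (hX : ∀ r < n, ∀ x ∈ A r, X x = c r) (x y : α) :
    Real.sign (X x - X y) = ∑ r ∈ Finset.range n, ∑ s ∈ Finset.range n,
      Real.sign (c r - c s) * (A r).indicator 1 x * (A s).indicator 1 y := by
  obtain ⟨r, ⟨hr, hxr⟩, -⟩ := hA x
  obtain ⟨s, ⟨hs, hys⟩, -⟩ := hA y
  simp only [sum_mul_indicator_eq_of_mem hA hs hys, sum_mul_indicator_eq_of_mem hA hr hxr,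
    hX r hr x hxr, hX s hs y hys]

lemma sign_mul_indicator_sub (K : Set α) (t : ℝ) (x y : α) :
    Real.sign (t * (K.indicator 1 x - K.indicator 1 y))
      = Real.sign t * (K.indicator 1 x - K.indicator 1 y) := by
  by_cases hx : x ∈ K <;> by_cases hy : y ∈ K <;> simp [hx, hy, Real.sign_neg]

theorem integral_sign_mul_sub_indicator [MeasurableSpace α] (μ ν : Measure α)
    [IsFiniteMeasure μ] [IsFiniteMeasure ν] (hA : ∀ x, ∃! r, r < n ∧ x ∈ A r)
    (hAm : ∀ m, MeasurableSet (A m)) {K : Set α} (hK : MeasurableSet K) {X : α → ℝ}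
    {c : ℕ → ℝ} (hX : ∀ r < n, ∀ x ∈ A r, X x = c r) :
    ∫ p, Real.sign ((X p.1 - X p.2) * (K.indicator 1 p.1 - K.indicator 1 p.2)) ∂(μ.prod ν)
      = ∑ r ∈ Finset.range n, ∑ s ∈ Finset.range n, Real.sign (c r - c s) *
          (μ.real (A r ∩ K) * ν.real (A s) - μ.real (A r) * ν.real (A s ∩ K)) := by
  have hpoint : ∀ p : α × α,
      Real.sign ((X p.1 - X p.2) * (K.indicator 1 p.1 - K.indicator 1 p.2))
        = ∑ r ∈ Finset.range n, ∑ s ∈ Finset.range n, Real.sign (c r - c s) *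
          ((A r ∩ K).indicator 1 p.1 * (A s).indicator 1 p.2
            - (A r).indicator 1 p.1 * (A s ∩ K).indicator 1 p.2) := by
    intro p
    rw [sign_mul_indicator_sub, sign_sub_eq_sum_indicator hA hX, Finset.sum_mul]
    refine Finset.sum_congr rfl fun r _ => ?_
    rw [Finset.sum_mul]
    refine Finset.sum_congr rfl fun s _ => ?_
    simp only [Set.inter_indicator_one, Pi.mul_apply]
    ring
  have hterm : ∀ r s, Integrable (fun p : α × α => Real.sign (c r - c s) *
      ((A r ∩ K).indicator 1 p.1 * (A s).indicator 1 p.2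
        - (A r).indicator 1 p.1 * (A s ∩ K).indicator 1 p.2)) (μ.prod ν) ∧
      ∫ p, Real.sign (c r - c s) * ((A r ∩ K).indicator 1 p.1 * (A s).indicator 1 p.2
        - (A r).indicator 1 p.1 * (A s ∩ K).indicator 1 p.2) ∂(μ.prod ν)
        = Real.sign (c r - c s) *
          (μ.real (A r ∩ K) * ν.real (A s) - μ.real (A r) * ν.real (A s ∩ K)) := by
    intro r s
    have hi₁ := integrable_indicator_one_mul_indicator_one μ ν ((hAm r).inter hK) (hAm s)
    have hi₂ := integrable_indicator_one_mul_indicator_one μ ν (hAm r) ((hAm s).inter hK)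
    refine ⟨(hi₁.sub hi₂).const_mul _, ?_⟩
    rw [integral_const_mul, integral_sub hi₁ hi₂,
      integral_indicator_one_mul_indicator_one μ ν ((hAm r).inter hK) (hAm s),
      integral_indicator_one_mul_indicator_one μ ν (hAm r) ((hAm s).inter hK)]
  simp_rw [hpoint]
  rw [integral_finsetSum _ fun r _ => integrable_finsetSum _ fun s _ => (hterm r s).1]
  refine Finset.sum_congr rfl fun r _ => ?_
  rw [integral_finsetSum _ fun s _ => (hterm r s).1]
  exact Finset.sum_congr rfl fun s _ => (hterm r s).2

end Partition

lemma measurable_real_sign : Measurable Real.sign :=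
  Measurable.ite measurableSet_Iio measurable_const
    (Measurable.ite measurableSet_Ioi measurable_const measurable_const)

lemma ProbabilityTheory.IndepFun.integral_comp_eq_integral_prod {Ω α β : Type*} [MeasurableSpace Ω]
    [MeasurableSpace α] [MeasurableSpace β] {μ : Measure Ω} [IsFiniteMeasure μ] {Z : Ω → α}
    {Z' : Ω → β} (hind : IndepFun Z Z' μ) (hZ : AEMeasurable Z μ) (hZ' : AEMeasurable Z' μ)
    {F : α × β → ℝ} (hF : Measurable F) :
    ∫ ω, F (Z ω, Z' ω) ∂μ = ∫ p, F p ∂((μ.map Z).prod (μ.map Z')) := by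
  rw [← hind.map_prod_eq_prod_map_map hZ hZ', integral_map (hZ.prodMk hZ') hF.aestronglyMeasurable]

lemma measurable_sign_mul_sub {α : Type*} [MeasurableSpace α] {X Y : α → ℝ} (hX : Measurable X)
    (hY : Measurable Y) :
    Measurable fun p : α × α => Real.sign ((X p.1 - X p.2) * (Y p.1 - Y p.2)) :=
  measurable_real_sign.comp (((hX.comp measurable_fst).sub (hX.comp measurable_snd)).mul
    ((hY.comp measurable_fst).sub (hY.comp measurable_snd)))

lemma sum_range_sum_range_eq_two_mul_of_symm {R : Type*} [CommSemiring R] (F : ℕ → ℕ → R)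
    (hsymm : ∀ r s, F r s = F s r) (hdiag : ∀ r, F r r = 0) (n : ℕ) :
    ∑ r ∈ Finset.range n, ∑ s ∈ Finset.range n, F r s
      = 2 * ∑ r ∈ Finset.range n, ∑ s ∈ Finset.range r, F r s := by
  induction n with
  | zero => simp
  | succ n ih =>
    simp only [Finset.sum_range_succ, Finset.sum_add_distrib, ih, hdiag, hsymm _ n]
    ring

lemma sum_range_sum_range_sign_mul_eq (n : ℕ) {Q P B φ : ℕ → ℝ}
    (hQ : ∀ m < n, Q m = φ (m + 1) - φ m) (hP : ∀ m < n, P m + (B (m + 1) - B m) = Q m)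
    (hB0 : B 0 = 0) (hφ0 : φ 0 = 0) :
    ∑ r ∈ Finset.range n, ∑ s ∈ Finset.range n,
        Real.sign ((r : ℝ) - s) * (P r * Q s - Q r * P s)
      = 2 * ∑ r ∈ Finset.Icc 1 (n - 1), (B r * φ (r + 1) - φ r * B (r + 1)) := by
  rw [sum_range_sum_range_eq_two_mul_of_symm _
    (fun r s => by rw [← neg_sub (s : ℝ), Real.sign_neg]; ring) (fun r => by simp)]
  have hinner : ∀ r < n, ∑ s ∈ Finset.range r, Real.sign ((r : ℝ) - s) * (P r * Q s - Q r * P s)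
      = B r * φ (r + 1) - φ r * B (r + 1) := by
    intro r hr
    calc ∑ s ∈ Finset.range r, Real.sign ((r : ℝ) - s) * (P r * Q s - Q r * P s)
        = ∑ s ∈ Finset.range r,
            (Q r * (B (s + 1) - B s) - (B (r + 1) - B r) * (φ (s + 1) - φ s)) := by
          refine Finset.sum_congr rfl fun s hs => ?_
          have hsr := Finset.mem_range.1 hs
          rw [Real.sign_of_pos (sub_pos.2 (Nat.cast_lt.2 hsr)), ← hQ s (by omega),
            ← hP r hr, ← hP s (by omega)]
          ring
      _ = B r * φ (r + 1) - φ r * B (r + 1) := by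
          rw [Finset.sum_sub_distrib, ← Finset.mul_sum, ← Finset.mul_sum,
            Finset.sum_range_sub, Finset.sum_range_sub, hQ r hr, hB0, hφ0]
          ring
  rw [Finset.sum_congr rfl fun r hr => hinner r (Finset.mem_range.1 hr)]
  congr 1
  refine (Finset.sum_subset (fun r hr => ?_) fun r hr hr' => ?_).symm
  · simp only [Finset.mem_Icc, Finset.mem_range] at hr ⊢
    omega
  · obtain rfl : r = 0 := by simp only [Finset.mem_Icc, Finset.mem_range] at hr hr'; omega
    simp [hB0, hφ0]

section Gaussian

variable {ρ : ℝ}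

lemma corrMat_det (ρ : ℝ) : (corrMat ρ).det = 1 - ρ ^ 2 := by
  simp [corrMat, Matrix.det_fin_two_of]
  ring

lemma corrMat_inv (h : 1 - ρ ^ 2 ≠ 0) :
    (corrMat ρ)⁻¹ = (1 - ρ ^ 2)⁻¹ • !![1, -ρ; -ρ, 1] := by
  refine Matrix.inv_eq_right_inv ?_
  ext i j
  fin_cases i <;> fin_cases j <;>
    simp [corrMat, Matrix.mul_apply, Fin.sum_univ_two] <;> field_simp <;> ring

lemma dotProduct_corrMat_inv_mulVec (h : 1 - ρ ^ 2 ≠ 0) (x : Fin 2 → ℝ) :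
    x ⬝ᵥ (corrMat ρ)⁻¹ *ᵥ x = x 0 ^ 2 + (x 1 - ρ * x 0) ^ 2 / (1 - ρ ^ 2) := by
  rw [corrMat_inv h]
  simp [dotProduct, Matrix.mulVec, Fin.sum_univ_two]
  field_simp
  ring

lemma mvGaussPDF_corrMat (hρ : ρ ∈ Set.Ioo (-1 : ℝ) 1) (x : Fin 2 → ℝ) :
    mvGaussPDF (corrMat ρ) x
      = gaussianPDFReal 0 1 (x 0) * gaussianPDFReal (ρ * x 0) (1 - ρ ^ 2).toNNReal (x 1) := by
  have hpos : 0 < 1 - ρ ^ 2 := by nlinarith [hρ.1, hρ.2]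
  have hsqrt : √((2 * π) ^ 2 * (1 - ρ ^ 2)) = √(2 * π * 1) * √(2 * π * (1 - ρ ^ 2)) := by
    rw [← Real.sqrt_mul (by positivity)]
    ring_nf
  rw [mvGaussPDF, dotProduct_corrMat_inv_mulVec hpos.ne', corrMat_det, gaussianPDFReal,
    gaussianPDFReal, Real.coe_toNNReal _ hpos.le, hsqrt, mul_inv, mul_mul_mul_comm,
    ← Real.exp_add]
  congr 2
  push_cast
  field_simp
  ring

lemma map_eval_zero_mvGauss_corrMat (hρ : ρ ∈ Set.Ioo (-1 : ℝ) 1) :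
    (mvGauss (corrMat ρ)).map (fun x => x 0) = gaussianReal 0 1 := by
  set v : ℝ≥0 := (1 - ρ ^ 2).toNNReal
  have hv : v ≠ 0 := by
    simp only [v, ne_eq, Real.toNNReal_eq_zero, not_le]
    nlinarith [hρ.1, hρ.2]
  ext s hs
  have hs0 : MeasurableSet ((fun x : Fin 2 → ℝ => x 0) ⁻¹' s) := measurable_pi_apply 0 hs
  set g : ℝ × ℝ → ℝ≥0∞ := fun p => s.indicator (gaussianPDF 0 1) p.1 * gaussianPDF (ρ * p.1) v p.2
  have hg : Measurable g := by
    refine ((measurable_gaussianPDF 0 1).indicator hs).comp measurable_fst |>.mul ?_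
    exact ENNReal.measurable_ofReal.comp (by unfold gaussianPDFReal; fun_prop)
  rw [Measure.map_apply (measurable_pi_apply 0) hs, mvGauss, withDensity_apply _ hs0,
    gaussianReal_apply 0 one_ne_zero, ← lintegral_indicator hs0, ← lintegral_indicator hs]
  calc ∫⁻ x, ((fun x : Fin 2 → ℝ => x 0) ⁻¹' s).indicator
          (fun x => ENNReal.ofReal (mvGaussPDF (corrMat ρ) x)) x
      = ∫⁻ x : Fin 2 → ℝ, g (MeasurableEquiv.finTwoArrow x) := by
        refine lintegral_congr fun x => ?_
        by_cases hx : x 0 ∈ s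
        · simp [g, hx, Set.indicator_of_mem, mvGaussPDF_corrMat hρ, gaussianPDF,
            ENNReal.ofReal_mul (gaussianPDFReal_nonneg _ _ _), v]
        · simp [g, hx]
    _ = ∫⁻ p, g p := (volume_preserving_finTwoArrow ℝ).lintegral_comp_emb
          MeasurableEquiv.finTwoArrow.measurableEmbedding g
    _ = ∫⁻ a, s.indicator (gaussianPDF 0 1) a := by
        rw [Measure.volume_eq_prod, lintegral_prod _ hg.aemeasurable]
        refine lintegral_congr fun a => ?_
        simp only [g]
        rw [lintegral_const_mul _ (measurable_gaussianPDF _ _), lintegral_gaussianPDF_eq_one _ hv,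
          mul_one]

lemma isProbabilityMeasure_mvGauss_corrMat (hρ : ρ ∈ Set.Ioo (-1 : ℝ) 1) :
    IsProbabilityMeasure (mvGauss (corrMat ρ)) := by
  have : IsProbabilityMeasure ((mvGauss (corrMat ρ)).map fun x => x 0) := by
    rw [map_eval_zero_mvGauss_corrMat hρ]
    infer_instance
  exact Measure.isProbabilityMeasure_of_map (fun x : Fin 2 → ℝ => x 0)

lemma mvGauss_corrMat_eval_zero_eq (hρ : ρ ∈ Set.Ioo (-1 : ℝ) 1) (c : ℝ) :
    mvGauss (corrMat ρ) {x | x 0 = c} = 0 := by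
  rw [show {x : Fin 2 → ℝ | x 0 = c} = (fun x => x 0) ⁻¹' {c} from rfl,
    ← Measure.map_apply (measurable_pi_apply 0) (measurableSet_singleton c),
    map_eval_zero_mvGauss_corrMat hρ]
  exact gaussianReal_absolutelyContinuous 0 one_ne_zero (measure_singleton c)

lemma stdPhi_eq_mvGauss_corrMat (hρ : ρ ∈ Set.Ioo (-1 : ℝ) 1) (a : EReal) :
    stdPhi a = (mvGauss (corrMat ρ)).real {x | (x 0 : EReal) ≤ a} := by
  rw [stdPhi, ← map_eval_zero_mvGauss_corrMat hρ, measureReal_def,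
    Measure.map_apply (measurable_pi_apply 0) (measurable_coe_real_ereal measurableSet_Iic)]
  rfl

lemma Phi2_eq_mvGauss (a : EReal) (b : ℝ) :
    Phi2 a b ρ = (mvGauss (corrMat ρ)).real ({x | (x 0 : EReal) ≤ a} ∩ {x | x 1 ≤ b}) := by
  rw [Phi2, PhiVec, measureReal_def]
  congr 2
  ext x
  simp [Fin.forall_fin_two]


variable {a b : EReal}

lemma mvGauss_corrMat_real_slab (hρ : ρ ∈ Set.Ioo (-1 : ℝ) 1) (hab : a ≤ b) :
    (mvGauss (corrMat ρ)).real {x | a ≤ (x 0 : EReal) ∧ (x 0 : EReal) < b}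
      = stdPhi b - stdPhi a := by
  have := isProbabilityMeasure_mvGauss_corrMat hρ
  simpa [stdPhi_eq_mvGauss_corrMat hρ] using measureReal_slab_inter (measurable_pi_apply 0)
    (mvGauss_corrMat_eval_zero_eq hρ) hab MeasurableSet.univ

lemma mvGauss_corrMat_real_slab_sdiff (hρ : ρ ∈ Set.Ioo (-1 : ℝ) 1) (hab : a ≤ b) (c : ℝ) :
    (mvGauss (corrMat ρ)).real ({x | a ≤ (x 0 : EReal) ∧ (x 0 : EReal) < b} \ {x | c < x 1})
      = Phi2 b c ρ - Phi2 a c ρ := by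
  have := isProbabilityMeasure_mvGauss_corrMat hρ
  have hcompl : {x : Fin 2 → ℝ | c < x 1}ᶜ = {x | x 1 ≤ c} := by
    ext x
    simp
  rw [Set.sdiff_eq, hcompl, Phi2_eq_mvGauss, Phi2_eq_mvGauss]
  exact measureReal_slab_inter (measurable_pi_apply 0) (mvGauss_corrMat_eval_zero_eq hρ) hab
    (measurable_pi_apply 1 measurableSet_Iic)

end Gaussian

lemma stdPhi_bot : stdPhi ⊥ = 0 := by
  simp [stdPhi]

lemma Phi2_bot_left (b : EReal) (ρ : ℝ) : Phi2 ⊥ b ρ = 0 := by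
  simp [Phi2, PhiVec, Fin.forall_fin_two]

lemma measurable_ordVar (l : ℕ) (Δ : ℕ → EReal) : Measurable (ordVar l Δ) :=
  Finset.measurable_sum _ fun _ _ => measurable_const.mul <| Measurable.ite
    ((measurable_coe_real_ereal measurableSet_Ici).inter
      (measurable_coe_real_ereal measurableSet_Iio))
    measurable_const measurable_const

lemma ordVar_eq_sum_indicator {α : Type*} (l : ℕ) (Δ : ℕ → EReal) (f : α → ℝ) (x : α) :
    ordVar l Δ (f x) = ∑ m ∈ Finset.range l,
      (m : ℝ) * {x | Δ m ≤ (f x : EReal) ∧ (f x : EReal) < Δ (m + 1)}.indicator 1 x := by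
  simp [ordVar, Set.indicator_apply]

lemma binVar_eq_indicator (Δ z : ℝ) : binVar Δ z = (Set.Ioi Δ).indicator 1 z := by
  simp [binVar, Set.indicator_apply]

theorem kendall_tau_ordinal_binary_general
    {Ω : Type*} [MeasurableSpace Ω] (μ : Measure Ω) [IsProbabilityMeasure μ]
    (ρ : ℝ) (hρ : ρ ∈ Set.Ioo (-1 : ℝ) 1)
    (lj : ℕ) (Δj : ℕ → EReal)
    (hΔj0 : Δj 0 = ⊥) (hΔjl : Δj lj = ⊤) (hΔjmono : ∀ m < lj, Δj m < Δj (m + 1))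
    (Δk : ℝ)
    (Z Z' : Ω → Fin 2 → ℝ) (hZm : Measurable Z) (hZ'm : Measurable Z')
    (hZ : Measure.map Z μ = mvGauss (corrMat ρ))
    (hZ' : Measure.map Z' μ = mvGauss (corrMat ρ))
    (hind : IndepFun Z Z' μ) :
    ∫ ω, Real.sign ((ordVar lj Δj (Z ω 0) - ordVar lj Δj (Z' ω 0)) *
        (binVar Δk (Z ω 1) - binVar Δk (Z' ω 1))) ∂μ
      = 2 * ∑ r ∈ Finset.Icc 1 (lj - 1),
          (Phi2 (Δj r) (Δk : EReal) ρ * stdPhi (Δj (r + 1))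
            - stdPhi (Δj r) * Phi2 (Δj (r + 1)) (Δk : EReal) ρ) := by
  have := isProbabilityMeasure_mvGauss_corrMat hρ
  set A : ℕ → Set (Fin 2 → ℝ) := fun m => {x | Δj m ≤ (x 0 : EReal) ∧ (x 0 : EReal) < Δj (m + 1)}
  set K : Set (Fin 2 → ℝ) := {x | Δk < x 1}
  have hK : MeasurableSet K := measurable_pi_apply 1 measurableSet_Ioi
  have hpart : ∀ x, ∃! r, r < lj ∧ x ∈ A r := fun x =>
    existsUnique_mem_Ico_of_le_succ (fun m hm => (hΔjmono m hm).le) (hΔj0 ▸ bot_le)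
      (hΔjl ▸ EReal.coe_lt_top (x 0))
  have hX : ∀ r < lj, ∀ x ∈ A r, ordVar lj Δj (x 0) = r := fun r hr x hx => by
    rw [ordVar_eq_sum_indicator lj Δj (fun x : Fin 2 → ℝ => x 0)]
    exact sum_mul_indicator_eq_of_mem hpart hr hx _
  have hord : Measurable fun x : Fin 2 → ℝ => ordVar lj Δj (x 0) :=
    (measurable_ordVar lj Δj).comp (measurable_pi_apply 0)
  have hlaw := hind.integral_comp_eq_integral_prod hZm.aemeasurable hZ'm.aemeasurable
    (measurable_sign_mul_sub hord (measurable_one.indicator hK))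
  rw [hZ, hZ', integral_sign_mul_sub_indicator _ _ hpart (fun m => by measurability) hK hX] at hlaw
  simp only [binVar_eq_indicator]
  refine hlaw.trans (sum_range_sum_range_sign_mul_eq lj (B := fun m => Phi2 (Δj m) Δk ρ)
    (φ := fun m => stdPhi (Δj m)) (fun m hm => mvGauss_corrMat_real_slab hρ (hΔjmono m hm).le)
    (fun m hm => ?_) (by rw [hΔj0, Phi2_bot_left]) (by rw [hΔj0, stdPhi_bot]))
  rw [← mvGauss_corrMat_real_slab_sdiff hρ (hΔjmono m hm).le, measureReal_inter_add_sdiff hK]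

/-- novel bridging function for an ordinal–binary pair with an arbitrary
number of levels, `F_ob` (Theorem 1).  For `r = l_j − 1` the conventions
`Φ(Δ_{j l_j}) = Φ(+∞) = 1` and `Φ₂(+∞, Δₖ; ρ) = Φ(Δₖ)` are built into the
extended-real versions `stdPhi` and `Phi2`. -/
theorem kendall_tau_ordinal_binary
    {Ω : Type*} [MeasurableSpace Ω] (μ : Measure Ω) [IsProbabilityMeasure μ]
    (ρ : ℝ) (hρ : ρ ∈ Set.Ioo (-1 : ℝ) 1)
    (lj : ℕ) (hlj : 2 ≤ lj) (Δj : ℕ → EReal)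
    (hΔj0 : Δj 0 = ⊥) (hΔjl : Δj lj = ⊤) (hΔjmono : ∀ m < lj, Δj m < Δj (m + 1))
    (Δk : ℝ)
    (Z Z' : Ω → Fin 2 → ℝ) (hZm : Measurable Z) (hZ'm : Measurable Z')
    (hZ : Measure.map Z μ = mvGauss (corrMat ρ))
    (hZ' : Measure.map Z' μ = mvGauss (corrMat ρ))
    (hind : IndepFun Z Z' μ) :
    ∫ ω, Real.sign ((ordVar lj Δj (Z ω 0) - ordVar lj Δj (Z' ω 0)) *
        (binVar Δk (Z ω 1) - binVar Δk (Z' ω 1))) ∂μ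
      = 2 * ∑ r ∈ Finset.Icc 1 (lj - 1),
          (Phi2 (Δj r) (Δk : EReal) ρ * stdPhi (Δj (r + 1))
            - stdPhi (Δj r) * Phi2 (Δj (r + 1)) (Δk : EReal) ρ) :=
  kendall_tau_ordinal_binary_general μ ρ hρ lj Δj hΔj0 hΔjl hΔjmono Δk Z Z' hZm hZ'm hZ hZ' hind
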